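/- arXiv:1706.06737 — 3 statements merged into one kernel-verified Lean document; each statement's English description precedes it below -/
import Mathlib

section
/- Let f ∈ H¹(ℝ; ℂ) and λ ∈ ℝ, k ≥ 1 an integer. Then |f(0)|² (1+λ²)^{k−1/2} ≤ C(k) ( ‖f‖²_{L²(ℝ)} + ‖f^{(k)}‖²_{L²(ℝ)} + λ^{2k} ‖f‖²_{L²(ℝ)} ), where C(k) depends only on k and f^{(k)} denotes the k-th derivative (assumed to exist in L²). -/
/-!
Fix a smooth compactly supported `g` that agrees with `x ^ (k - 1) / (k - 1)!` near `0`.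
Integrating by parts `k` times on `(0, ∞)`, every boundary term but one vanishes, which gives
`u 0 = ± ∫₀^∞ g u⁽ᵏ⁾ - ∫₀^∞ g⁽ᵏ⁾ u`; Cauchy–Schwarz turns this into
`|u 0|² ≤ C (‖u⁽ᵏ⁾‖² + ‖u‖²)`. Applied to `u x = f (x / t)`, for which `‖u‖² = t ‖f‖²` and
`‖u⁽ᵏ⁾‖² = t ^ (1 - 2k) ‖f⁽ᵏ⁾‖²`, it gives `|f 0|² t ^ (2k - 1) ≤ C (‖f⁽ᵏ⁾‖² + t ^ (2k) ‖f‖²)`;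
take `t = √(1 + λ²)` and use `(1 + λ²) ^ k ≤ 2 ^ k (1 + λ ^ (2k))`.
-/

open MeasureTheory Set Filter Topology
open scoped ContDiff Nat

theorem HasCompactSupport.iteratedDeriv {𝕜 F : Type*} [NontriviallyNormedField 𝕜]
    [NormedAddCommGroup F] [NormedSpace 𝕜 F] {f : 𝕜 → F} (hf : HasCompactSupport f) (n : ℕ) :
    HasCompactSupport (iteratedDeriv n f) := by
  rw [iteratedDeriv_eq_iterate]
  induction n with
  | zero => exact hf
  | succ n ih => rw [Function.iterate_succ_apply']; exact ih.deriv

theorem MeasureTheory.MemLp.comp_mul_left {F : Type*} [NormedAddCommGroup F] {p : ENNReal}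
    {f : ℝ → F} (hf : MemLp f p volume) {c : ℝ} (hc : c ≠ 0) :
    MemLp (fun x => f (c * x)) p volume := by
  refine MemLp.comp_of_map ?_ (measurable_const_mul c).aemeasurable
  rw [Real.map_volume_mul_left hc]
  exact hf.smul_measure ENNReal.ofReal_ne_top

theorem sq_norm_setIntegral_smul_le {α E : Type*} [MeasurableSpace α] [NormedAddCommGroup E]
    [NormedSpace ℝ E] {μ : Measure α} (s : Set α) {g : α → ℝ} {v : α → E}
    (hg : MemLp g 2 μ) (hv : MemLp v 2 μ) :
    ‖∫ x in s, g x • v x ∂μ‖ ^ 2 ≤ (∫ x, g x ^ 2 ∂μ) * ∫ x, ‖v x‖ ^ 2 ∂μ := by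
  have hg2 : Integrable (fun x => g x ^ 2) μ := by
    simpa using (memLp_two_iff_integrable_sq_norm hg.1).mp hg
  have hv2 : Integrable (fun x => ‖v x‖ ^ 2) μ := (memLp_two_iff_integrable_sq_norm hv.1).mp hv
  have hholder := integral_mul_le_Lp_mul_Lq_of_nonneg (μ := μ.restrict s)
    Real.HolderConjugate.two_two (.of_forall fun x => norm_nonneg (g x))
    (.of_forall fun x => norm_nonneg (v x)) (by simpa using (hg.restrict s).norm)
    (by simpa using (hv.restrict s).norm)
  simp only [Real.rpow_two, Real.norm_eq_abs, sq_abs, ← Real.sqrt_eq_rpow] at hholder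
  have hle : ‖∫ x in s, g x • v x ∂μ‖ ≤ ∫ x in s, |g x| * ‖v x‖ ∂μ :=
    (norm_integral_le_integral_norm _).trans_eq (by simp_rw [norm_smul, Real.norm_eq_abs])
  calc ‖∫ x in s, g x • v x ∂μ‖ ^ 2
      ≤ (√(∫ x in s, g x ^ 2 ∂μ) * √(∫ x in s, ‖v x‖ ^ 2 ∂μ)) ^ 2 := by
        gcongr; exact hle.trans hholder
    _ = (∫ x in s, g x ^ 2 ∂μ) * ∫ x in s, ‖v x‖ ^ 2 ∂μ := by
        rw [mul_pow, Real.sq_sqrt (by positivity), Real.sq_sqrt (by positivity)]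
    _ ≤ (∫ x, g x ^ 2 ∂μ) * ∫ x, ‖v x‖ ^ 2 ∂μ :=
        mul_le_mul (setIntegral_le_integral hg2 (.of_forall fun x => sq_nonneg _))
          (setIntegral_le_integral hv2 (.of_forall fun x => sq_nonneg _))
          (integral_nonneg fun x => sq_nonneg _) (integral_nonneg fun x => sq_nonneg _)

theorem exists_contDiff_hasCompactSupport_iteratedDeriv_zero (n : ℕ) :
    ∃ g : ℝ → ℝ, ContDiff ℝ ∞ g ∧ HasCompactSupport g ∧
      (∀ j < n, iteratedDeriv j g 0 = 0) ∧ iteratedDeriv n g 0 = 1 := by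
  let χ : ContDiffBump (0 : ℝ) := ⟨1, 2, one_pos, one_lt_two⟩
  have hloc : (fun x => x ^ n / n ! * χ x) =ᶠ[𝓝 0] fun x => x ^ n / n ! := by
    filter_upwards [χ.eventuallyEq_one] with x hx
    simp [hx]
  have hderiv (j : ℕ) :
      iteratedDeriv j (fun x => x ^ n / n ! * χ x) 0 = if j = n then 1 else 0 := by
    rw [hloc.iteratedDeriv_eq, iteratedDeriv_div_const, iteratedDeriv_fun_pow_zero]
    split_ifs <;> simp [Nat.factorial_ne_zero]
  refine ⟨fun x => x ^ n / n ! * χ x, ?_, ?_, fun j hj => ?_, ?_⟩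
  · exact ((contDiff_id.pow n).div_const _).mul χ.contDiff
  · exact χ.hasCompactSupport.mul_left
  · simp [hderiv, hj.ne]
  · simp [hderiv]

section

variable {E : Type*} [NormedAddCommGroup E] [NormedSpace ℝ E] [CompleteSpace E]

theorem integral_Ioi_smul_deriv {g : ℝ → ℝ} {u : ℝ → E} (a : ℝ) (hg : ContDiff ℝ 1 g)
    (hgs : HasCompactSupport g) (hu : ContDiff ℝ 1 u) :
    ∫ x in Ioi a, g x • deriv u x = -(g a • u a) - ∫ x in Ioi a, deriv g x • u x := by
  have hint₁ : Integrable fun x => g x • deriv u x :=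
    (hg.continuous.smul (hu.continuous_deriv le_rfl)).integrable_of_hasCompactSupport
      hgs.smul_right
  have hint₂ : Integrable fun x => deriv g x • u x :=
    ((hg.continuous_deriv le_rfl).smul hu.continuous).integrable_of_hasCompactSupport
      hgs.deriv.smul_right
  have hftc := integral_Ioi_of_hasDerivAt_of_tendsto (f := fun x => g x • u x) (a := a)
    (hg.continuous.smul hu.continuous).continuousWithinAt
    (fun x _ => (hg.differentiable one_ne_zero x).hasDerivAt.smul
      (hu.differentiable one_ne_zero x).hasDerivAt)
    (hint₁.add hint₂).integrableOn
    (hgs.smul_right.is_zero_at_infty.mono_left atTop_le_cocompact)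
  rw [integral_add hint₁.integrableOn hint₂.integrableOn] at hftc
  linear_combination (norm := module) hftc

theorem integral_Ioi_smul_iteratedDeriv {g : ℝ → ℝ} {u : ℝ → E} (a : ℝ) {n : ℕ}
    (hg : ContDiff ℝ n g) (hgs : HasCompactSupport g) (hga : ∀ j < n, iteratedDeriv j g a = 0)
    (hu : ContDiff ℝ n u) :
    ∫ x in Ioi a, g x • iteratedDeriv n u x =
      (-1 : ℝ) ^ n • ∫ x in Ioi a, iteratedDeriv n g x • u x := by
  induction n generalizing u with
  | zero => simp
  | succ n ih =>
    obtain ⟨hg, hg₁⟩ := contDiff_nat_succ_iff_contDiff_one_iteratedDeriv.mp hg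
    push_cast at hu
    rw [iteratedDeriv_succ', ih hg (fun j hj => hga j (by omega)) hu.deriv',
      integral_Ioi_smul_deriv a hg₁ (hgs.iteratedDeriv n) (hu.of_le (by simp)),
      hga n n.lt_succ_self, ← iteratedDeriv_succ, pow_succ]
    module

theorem eq_integral_Ioi_iteratedDeriv {g : ℝ → ℝ} {u : ℝ → E} (a : ℝ) {n : ℕ}
    (hg : ContDiff ℝ (n + 1 : ℕ) g) (hgs : HasCompactSupport g)
    (hga : ∀ j < n, iteratedDeriv j g a = 0) (hgn : iteratedDeriv n g a = 1)
    (hu : ContDiff ℝ (n + 1 : ℕ) u) :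
    u a = (-1 : ℝ) ^ (n + 1) • (∫ x in Ioi a, g x • iteratedDeriv (n + 1) u x)
      - ∫ x in Ioi a, iteratedDeriv (n + 1) g x • u x := by
  obtain ⟨hg, hg₁⟩ := contDiff_nat_succ_iff_contDiff_one_iteratedDeriv.mp hg
  push_cast at hu
  rw [iteratedDeriv_succ', integral_Ioi_smul_iteratedDeriv a hg hgs hga hu.deriv',
    integral_Ioi_smul_deriv a hg₁ (hgs.iteratedDeriv n) (hu.of_le (by simp)), hgn,
    ← iteratedDeriv_succ, smul_smul, ← pow_add, Odd.neg_one_pow ⟨n, by ring⟩]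
  module

theorem exists_sq_norm_le_integral_sq_norm_iteratedDeriv {k : ℕ} (hk : k ≠ 0) :
    ∃ C : ℝ, 0 < C ∧ ∀ u : ℝ → E, ContDiff ℝ k u → MemLp u 2 volume →
      MemLp (iteratedDeriv k u) 2 volume →
      ‖u 0‖ ^ 2 ≤ C * ((∫ x, ‖iteratedDeriv k u x‖ ^ 2) + ∫ x, ‖u x‖ ^ 2) := by
  obtain ⟨n, rfl⟩ := Nat.exists_eq_succ_of_ne_zero hk
  obtain ⟨g, hg, hgs, hg0, hgn⟩ := exists_contDiff_hasCompactSupport_iteratedDeriv_zero n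
  have hg2 : MemLp g 2 volume := hg.continuous.memLp_of_hasCompactSupport hgs
  have hgk2 : MemLp (iteratedDeriv (n + 1) g) 2 volume :=
    (hg.continuous_iteratedDeriv _ (by exact_mod_cast le_top)).memLp_of_hasCompactSupport
      (hgs.iteratedDeriv _)
  set Cg := ∫ x, g x ^ 2
  set Ch := ∫ x, iteratedDeriv (n + 1) g x ^ 2
  have hCg : 0 ≤ Cg := integral_nonneg fun x => sq_nonneg _
  have hCh : 0 ≤ Ch := integral_nonneg fun x => sq_nonneg _
  refine ⟨2 * (Cg + Ch + 1), by positivity, fun u hu hu2 huk2 => ?_⟩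
  have hrep :=
    eq_integral_Ioi_iteratedDeriv 0 (hg.of_le (by exact_mod_cast le_top)) hgs hg0 hgn hu
  set I₁ := ∫ x in Ioi 0, g x • iteratedDeriv (n + 1) u x
  set I₂ := ∫ x in Ioi 0, iteratedDeriv (n + 1) g x • u x
  have hnorm : ‖u 0‖ ≤ ‖I₁‖ + ‖I₂‖ := by
    rw [hrep]; exact (norm_sub_le _ _).trans_eq (by simp [norm_smul])
  have h₁ := sq_norm_setIntegral_smul_le (Ioi 0) hg2 huk2
  have h₂ := sq_norm_setIntegral_smul_le (Ioi 0) hgk2 hu2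
  set A := ∫ x, ‖u x‖ ^ 2
  set B := ∫ x, ‖iteratedDeriv (n + 1) u x‖ ^ 2
  have hA : 0 ≤ A := integral_nonneg fun x => sq_nonneg _
  have hB : 0 ≤ B := integral_nonneg fun x => sq_nonneg _
  calc ‖u 0‖ ^ 2 ≤ (‖I₁‖ + ‖I₂‖) ^ 2 := by gcongr
    _ ≤ 2 * (‖I₁‖ ^ 2 + ‖I₂‖ ^ 2) := add_sq_le
    _ ≤ 2 * (Cg * B + Ch * A) := by gcongr
    _ ≤ 2 * (Cg + Ch + 1) * (B + A) := by nlinarith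

theorem exists_sq_norm_mul_pow_le {k : ℕ} (hk : k ≠ 0) :
    ∃ C : ℝ, 0 < C ∧ ∀ f : ℝ → E, ContDiff ℝ k f → MemLp f 2 volume →
      MemLp (iteratedDeriv k f) 2 volume → ∀ t : ℝ, 0 < t →
      ‖f 0‖ ^ 2 * t ^ (2 * k) ≤
        C * t * ((∫ x, ‖iteratedDeriv k f x‖ ^ 2) + t ^ (2 * k) * ∫ x, ‖f x‖ ^ 2) := by
  obtain ⟨C, hC, hbound⟩ := exists_sq_norm_le_integral_sq_norm_iteratedDeriv (E := E) hk
  refine ⟨C, hC, fun f hf hf2 hfk2 t ht => ?_⟩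
  have hdu : iteratedDeriv k (fun x => f (t⁻¹ * x)) =
      fun x => (t⁻¹) ^ k • iteratedDeriv k f (t⁻¹ * x) :=
    iteratedDeriv_comp_const_smul hf _
  have hA : ∫ x, ‖f (t⁻¹ * x)‖ ^ 2 = t * ∫ x, ‖f x‖ ^ 2 := by
    rw [Measure.integral_comp_inv_mul_left (fun y => ‖f y‖ ^ 2), abs_of_pos ht, smul_eq_mul]
  have hB : ∫ x, ‖iteratedDeriv k (fun x => f (t⁻¹ * x)) x‖ ^ 2 =
      (t⁻¹) ^ (2 * k) * t * ∫ x, ‖iteratedDeriv k f x‖ ^ 2 := by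
    simp_rw [hdu, norm_smul, mul_pow, integral_const_mul]
    rw [Measure.integral_comp_inv_mul_left (fun y => ‖iteratedDeriv k f y‖ ^ 2), abs_of_pos ht,
      smul_eq_mul, Real.norm_eq_abs, abs_of_pos (by positivity), ← pow_mul, mul_comm k 2,
      mul_assoc]
  have hscaled := hbound (fun x => f (t⁻¹ * x)) (hf.comp (contDiff_const.mul contDiff_id))
    (hf2.comp_mul_left (inv_ne_zero ht.ne'))
    (hdu ▸ (hfk2.comp_mul_left (inv_ne_zero ht.ne')).const_smul _)
  rw [hA, hB, mul_zero] at hscaled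
  have htk : (t⁻¹) ^ (2 * k) * t ^ (2 * k) = 1 := by
    rw [← mul_pow, inv_mul_cancel₀ ht.ne', one_pow]
  calc ‖f 0‖ ^ 2 * t ^ (2 * k)
      ≤ C * ((t⁻¹) ^ (2 * k) * t * (∫ x, ‖iteratedDeriv k f x‖ ^ 2) +
          t * ∫ x, ‖f x‖ ^ 2) * t ^ (2 * k) := by gcongr
    _ = C * t * ((∫ x, ‖iteratedDeriv k f x‖ ^ 2) + t ^ (2 * k) * ∫ x, ‖f x‖ ^ 2) := by
        linear_combination (C * t * ∫ x, ‖iteratedDeriv k f x‖ ^ 2) * htk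

end

theorem one_add_pow_le_two_pow_mul {a : ℝ} (ha : 0 ≤ a) (k : ℕ) :
    (1 + a) ^ k ≤ 2 ^ k * (1 + a ^ k) :=
  calc (1 + a) ^ k ≤ 2 ^ (k - 1) * (1 ^ k + a ^ k) := add_pow_le zero_le_one ha k
    _ ≤ 2 ^ k * (1 + a ^ k) := by
        rw [one_pow]
        gcongr
        exacts [one_le_two, k.sub_le 1]

/-- The pointwise trace estimate: there is a constant `C(k)` depending only on `k ≥ 1`
such that for every `f` with `f, f^{(k)} ∈ L²(ℝ)` and every `λ ∈ ℝ`,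
`|f(0)|² (1+λ²)^{k-1/2} ≤ C(k) (‖f‖²_{L²} + ‖f^{(k)}‖²_{L²} + λ^{2k} ‖f‖²_{L²})`. -/
theorem trace_estimate (k : ℕ) (hk : 1 ≤ k) :
    ∃ C : ℝ, 0 < C ∧ ∀ (f : ℝ → ℂ) (lam : ℝ),
      ContDiff ℝ (k : ℕ∞) f →
      MemLp f 2 (volume : Measure ℝ) →
      MemLp (iteratedDeriv k f) 2 (volume : Measure ℝ) →
      ‖f 0‖ ^ 2 * (1 + lam ^ 2) ^ ((k : ℝ) - 1 / 2) ≤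
        C * ((∫ t : ℝ, ‖f t‖ ^ 2) + (∫ t : ℝ, ‖iteratedDeriv k f t‖ ^ 2) +
              lam ^ (2 * k) * ∫ t : ℝ, ‖f t‖ ^ 2) := by
  obtain ⟨C, hC, hbound⟩ := exists_sq_norm_mul_pow_le (E := ℂ) (k := k) (by omega)
  refine ⟨C * 2 ^ k, by positivity, fun f lam hf hf2 hfk2 => ?_⟩
  set t := √(1 + lam ^ 2)
  have ht : 0 < t := by positivity
  have hscaled := hbound f hf hf2 hfk2 t ht
  set A := ∫ t : ℝ, ‖f t‖ ^ 2
  set B := ∫ t : ℝ, ‖iteratedDeriv k f t‖ ^ 2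
  have hB : 0 ≤ B := integral_nonneg fun x => sq_nonneg _
  have htk : t ^ (2 * k) = (1 + lam ^ 2) ^ k := by rw [pow_mul, Real.sq_sqrt (by positivity)]
  have hrpow : (1 + lam ^ 2) ^ ((k : ℝ) - 1 / 2) = t ^ (2 * k) / t := by
    rw [Real.rpow_sub (by positivity), Real.rpow_natCast, ← Real.sqrt_eq_rpow, htk]
  have hbinom : (1 + lam ^ 2) ^ k ≤ 2 ^ k * (1 + lam ^ (2 * k)) := by
    simpa only [pow_mul] using one_add_pow_le_two_pow_mul (sq_nonneg lam) k
  calc ‖f 0‖ ^ 2 * (1 + lam ^ 2) ^ ((k : ℝ) - 1 / 2)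
      ≤ C * (B + t ^ (2 * k) * A) := by
        rw [hrpow, mul_div_assoc', div_le_iff₀ ht]; linarith
    _ ≤ C * (B + 2 ^ k * (1 + lam ^ (2 * k)) * A) := by rw [htk]; gcongr
    _ ≤ C * (2 ^ k * B + 2 ^ k * (1 + lam ^ (2 * k)) * A) := by
        gcongr; exact le_mul_of_one_le_left hB (one_le_pow₀ one_le_two)
    _ = C * 2 ^ k * (A + B + lam ^ (2 * k) * A) := by ring
end

section
/- Let H be a Hilbert space and let X₁, X₂ ⊆ H be closed subspaces that are finite rank perturbations of each other, i.e., there is a finite-dimensional subspace Y with X₂ ⊆ X₁ + Y (sum direct) and dim((X₁ ⊕ Y)/X₂) < ∞. Then the relative index [X₁, X₂] := dim((X₁ ⊕ Y)/X₂) − dim Y is independent of the choice of such Y. -/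
/-- The candidate relative index of closed subspaces `X₁, X₂` computed with a
finite-dimensional subspace `Y` such that `X₂ ⊆ X₁ ⊕ Y`:
`[X₁, X₂]_Y := dim((X₁ ⊕ Y)/X₂) − dim Y`. -/
noncomputable def relIdxWith {H : Type*} [NormedAddCommGroup H]
    [InnerProductSpace ℂ H] (X₁ X₂ Y : Submodule ℂ H) : ℤ :=
  (Module.finrank ℂ (↥(X₁ ⊔ Y) ⧸ X₂.comap (X₁ ⊔ Y).subtype) : ℤ) -
    (Module.finrank ℂ Y : ℤ)

open Module Submodule

/-- Extension closedness of finite-dimensionality. -/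
lemma fd_of_submodule_quotient {K V : Type*} [Field K] [AddCommGroup V] [Module K V]
    (S : Submodule K V) (hS : FiniteDimensional K S) (hQ : FiniteDimensional K (V ⧸ S)) :
    FiniteDimensional K V := by
  have h1 : Module.rank K V < Cardinal.aleph0 := by
    rw [← rank_quotient_add_rank_of_divisionRing S]
    exact Cardinal.add_lt_aleph0 (Module.rank_lt_aleph0 K _) (Module.rank_lt_aleph0 K _)
  exact Module.rank_lt_aleph0_iff.mp h1

/-- Given finite-dimensional `Y ≤ W` with `Y` disjoint from `X₁`, extend `Y` inside `W`
to `Y₂` disjoint from `X₁` with `X₁ ⊔ Y₂ = X₁ ⊔ W`. -/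
lemma exists_extend {K V : Type*} [Field K] [AddCommGroup V] [Module K V]
    (X₁ W Y : Submodule K V) [FiniteDimensional K W] (hYW : Y ≤ W)
    (hd : Disjoint X₁ Y) :
    ∃ Y₂ : Submodule K V, Y ≤ Y₂ ∧ Y₂ ≤ W ∧ Disjoint X₁ Y₂ ∧ X₁ ⊔ Y₂ = X₁ ⊔ W := by
  obtain ⟨Q, hQ⟩ := Submodule.exists_isCompl (((X₁ ⊓ W) ⊔ Y).comap W.subtype)
  set C : Submodule K V := Q.map W.subtype with hC
  have hCW : C ≤ W := Submodule.map_subtype_le _ _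
  refine ⟨Y ⊔ C, le_sup_left, sup_le hYW hCW, ?_, ?_⟩
  · rw [disjoint_def]
    intro v hv hvYC
    obtain ⟨y, hy, c, hc, rfl⟩ := Submodule.mem_sup.mp hvYC
    obtain ⟨q, hq, rfl⟩ := hc
    have hvW : y + (q : V) ∈ W := W.add_mem (hYW hy) q.2
    have hq' : (q : V) ∈ (X₁ ⊓ W) ⊔ Y := by
      have : (y + (q : V)) - y ∈ (X₁ ⊓ W) ⊔ Y := by
        refine Submodule.sub_mem _ ?_ (Submodule.mem_sup_right hy)
        exact Submodule.mem_sup_left ⟨hv, hvW⟩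
      rwa [add_sub_cancel_left] at this
    have : q = 0 := by
      have : q ∈ (((X₁ ⊓ W) ⊔ Y).comap W.subtype) ⊓ Q := ⟨hq', hq⟩
      rwa [hQ.inf_eq_bot, Submodule.mem_bot] at this
    rw [this] at hv ⊢
    simp only [map_zero, add_zero] at hv ⊢
    exact (Submodule.mem_bot K).mp (hd.le_bot ⟨hv, hy⟩)
  · refine le_antisymm (sup_le le_sup_left (sup_le (hYW.trans le_sup_right)
      (hCW.trans le_sup_right))) (sup_le le_sup_left ?_)
    intro w hw
    have : (⟨w, hw⟩ : W) ∈ (((X₁ ⊓ W) ⊔ Y).comap W.subtype) ⊔ Q := by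
      rw [hQ.sup_eq_top]; trivial
    obtain ⟨p, hp, q, hq, hpq⟩ := Submodule.mem_sup.mp this
    have hw' : w = (p : V) + (q : V) := by
      have := congrArg (Subtype.val) hpq; simpa using this.symm
    rw [hw']
    refine Submodule.add_mem _ ?_ ?_
    · have hpm : (p : V) ∈ (X₁ ⊓ W) ⊔ Y := hp
      exact (sup_le_sup (inf_le_left : X₁ ⊓ W ≤ X₁)
        (le_sup_left : Y ≤ Y ⊔ C)) hpm
    · exact Submodule.mem_sup_right (Submodule.mem_sup_right ⟨q, hq, rfl⟩)

/-- If `X₁ ⊔ Y = X₁ ⊔ Y'` with both `Y, Y'` finite-dimensional complements of `X₁`,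
they have equal dimension. -/
lemma finrank_eq_of_sup_eq {K V : Type*} [Field K] [AddCommGroup V] [Module K V]
    (X₁ Y Y' : Submodule K V) [FiniteDimensional K Y] [FiniteDimensional K Y']
    (hd : Disjoint X₁ Y) (hd' : Disjoint X₁ Y') (hZ : X₁ ⊔ Y = X₁ ⊔ Y') :
    finrank K Y = finrank K Y' := by
  have key : ∀ (Y₀ : Submodule K V), Disjoint X₁ Y₀ → ∀ (h : X₁ ⊔ Y = X₁ ⊔ Y₀),
      finrank K Y₀ = finrank K (↥(X₁ ⊔ Y) ⧸ X₁.comap (X₁ ⊔ Y).subtype) := by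
    intro Y₀ hd₀ h
    set Z := X₁ ⊔ Y with hZdef
    have hY₀Z : Y₀ ≤ Z := h ▸ le_sup_right
    let k : Y₀ →ₗ[K] ↥Z ⧸ X₁.comap Z.subtype :=
      (X₁.comap Z.subtype).mkQ ∘ₗ Submodule.inclusion hY₀Z
    have hker : LinearMap.ker k = ⊥ := by
      rw [LinearMap.ker_eq_bot']
      intro y hy
      have : ((Submodule.inclusion hY₀Z) y : V) ∈ X₁ := by
        simpa [k, Submodule.Quotient.mk_eq_zero] using hy
      have : (y : V) ∈ X₁ := this
      ext
      exact (Submodule.mem_bot K).mp (hd₀.le_bot ⟨this, y.2⟩)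
    have hsur : Function.Surjective k := by
      rintro z
      obtain ⟨⟨z, hz⟩, rfl⟩ := Submodule.Quotient.mk_surjective _ z
      have hz' : z ∈ X₁ ⊔ Y₀ := h ▸ hz
      obtain ⟨x, hx, y, hy, rfl⟩ := Submodule.mem_sup.mp hz'
      refine ⟨⟨y, hy⟩, ?_⟩
      have : (⟨x + y, hz⟩ : Z) - (Submodule.inclusion hY₀Z ⟨y, hy⟩) ∈ X₁.comap Z.subtype := by
        simpa [Submodule.inclusion] using hx
      show Submodule.Quotient.mk (Submodule.inclusion hY₀Z ⟨y, hy⟩) = _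
      exact (Submodule.Quotient.eq _).mpr (by simpa using neg_mem this)
    exact LinearEquiv.finrank_eq
      (LinearEquiv.ofBijective k ⟨LinearMap.ker_eq_bot.mp hker, hsur⟩)
  rw [key Y hd rfl, key Y' hd' hZ]

/-- The key step: enlarging `Y` to `Y₂` (still disjoint from `X₁`) does not change the
relative index. -/
lemma relIdxWith_sup {H : Type*} [NormedAddCommGroup H] [InnerProductSpace ℂ H]
    (X₁ X₂ Y Y₂ : Submodule ℂ H) (hYY : Y ≤ Y₂) (hd : Disjoint X₁ Y₂)
    (hle : X₂ ≤ X₁ ⊔ Y) [FiniteDimensional ℂ Y₂]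
    [hq : FiniteDimensional ℂ (↥(X₁ ⊔ Y) ⧸ X₂.comap (X₁ ⊔ Y).subtype)] :
    relIdxWith X₁ X₂ Y = relIdxWith X₁ X₂ Y₂ := by
  classical
  set A := X₁ ⊔ Y with hA
  set B := X₁ ⊔ Y₂ with hB
  have hAB : A ≤ B := sup_le_sup_left hYY X₁
  have hYfd : FiniteDimensional ℂ Y := FiniteDimensional.of_injective
    (Submodule.inclusion hYY) (Submodule.inclusion_injective hYY)
  -- the map A → B/X₂
  set M := ↥B ⧸ X₂.comap B.subtype with hM
  let f : ↥A →ₗ[ℂ] M := (X₂.comap B.subtype).mkQ ∘ₗ Submodule.inclusion hAB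
  have hkerf : LinearMap.ker f = X₂.comap A.subtype := by
    ext x
    constructor
    · intro h0
      have h0' : (Submodule.Quotient.mk (Submodule.inclusion hAB x) : M) = 0 := h0
      have h0'' := (Submodule.Quotient.mk_eq_zero _).mp h0'
      exact h0''
    · intro hx
      have h1 : (Submodule.Quotient.mk (Submodule.inclusion hAB x) : M) = 0 :=
        (Submodule.Quotient.mk_eq_zero _).mpr hx
      exact h1
  set S := LinearMap.range f with hS
  have e₁ : (↥A ⧸ X₂.comap A.subtype) ≃ₗ[ℂ] S :=
    (Submodule.quotEquivOfEq _ _ hkerf.symm).trans f.quotKerEquivRange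
  have hSfd : FiniteDimensional ℂ S := Module.Finite.equiv e₁
  -- claim : Y₂ ⊓ A ≤ Y
  have hYA : ∀ v : H, v ∈ Y₂ → v ∈ A → v ∈ Y := by
    intro v hv hvA
    obtain ⟨x, hx, y, hy, rfl⟩ := Submodule.mem_sup.mp hvA
    have hx2 : x ∈ Y₂ := by
      have : (x + y) - y ∈ Y₂ := Submodule.sub_mem _ hv (hYY hy)
      simpa using this
    have : x = 0 := (Submodule.mem_bot ℂ).mp (hd.le_bot ⟨hx, hx2⟩)
    simpa [this] using hy
  -- the map Y₂ → (B/X₂)/S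
  let g : ↥Y₂ →ₗ[ℂ] M ⧸ S :=
    S.mkQ ∘ₗ (X₂.comap B.subtype).mkQ ∘ₗ Submodule.inclusion (le_sup_right : Y₂ ≤ B)
  have hmemS : ∀ (b : ↥B), (b : H) ∈ A → (Submodule.Quotient.mk b : M) ∈ S := by
    intro b hb
    exact ⟨⟨(b : H), hb⟩, rfl⟩
  have hsurg : Function.Surjective g := by
    rintro z
    obtain ⟨m, rfl⟩ := Submodule.Quotient.mk_surjective _ z
    obtain ⟨⟨b, hb⟩, rfl⟩ := Submodule.Quotient.mk_surjective _ m
    obtain ⟨x, hx, y, hy, rfl⟩ := Submodule.mem_sup.mp hb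
    refine ⟨⟨y, hy⟩, ?_⟩
    have hxA : x ∈ A := Submodule.mem_sup_left hx
    have : (Submodule.Quotient.mk (⟨x + y, hb⟩ : ↥B) : M) -
        Submodule.Quotient.mk (Submodule.inclusion (le_sup_right : Y₂ ≤ B) ⟨y, hy⟩) ∈ S := by
      rw [← Submodule.Quotient.mk_sub]
      exact hmemS _ (by simpa [Submodule.inclusion] using hxA)
    show Submodule.Quotient.mk (Submodule.Quotient.mk
      (Submodule.inclusion (le_sup_right : Y₂ ≤ B) ⟨y, hy⟩)) = _
    exact (Submodule.Quotient.eq S).mpr (by simpa using neg_mem this)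
  have hkerg : LinearMap.ker g = Y.comap Y₂.subtype := by
    ext ⟨y, hy⟩
    simp only [LinearMap.mem_ker, Submodule.mem_comap]
    constructor
    · intro h0
      have : (Submodule.Quotient.mk (Submodule.inclusion (le_sup_right : Y₂ ≤ B) ⟨y, hy⟩) : M)
          ∈ S := by
        rwa [← Submodule.Quotient.mk_eq_zero S]
      obtain ⟨⟨a, haA⟩, ha⟩ := this
      -- f ⟨a⟩ = mk ⟨y⟩ means y - a ∈ X₂ ≤ A
      have : (⟨a, hAB haA⟩ : ↥B) - Submodule.inclusion (le_sup_right : Y₂ ≤ B) ⟨y, hy⟩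
          ∈ X₂.comap B.subtype := by
        rw [← Submodule.Quotient.eq]
        exact ha
      have hya : a - y ∈ X₂ := by simpa [Submodule.inclusion] using this
      have hyA : y ∈ A := by
        have : a - (a - y) ∈ A := Submodule.sub_mem _ haA (hle hya)
        simpa using this
      exact hYA y hy hyA
    · intro hyY
      have hyA : y ∈ A := Submodule.mem_sup_right hyY
      show S.mkQ _ = 0
      rw [Submodule.mkQ_apply, Submodule.Quotient.mk_eq_zero]
      exact hmemS _ hyA
  have e₂ : (↥Y₂ ⧸ Y.comap Y₂.subtype) ≃ₗ[ℂ] M ⧸ S :=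
    (Submodule.quotEquivOfEq _ _ hkerg.symm).trans (g.quotKerEquivOfSurjective hsurg)
  have hMSfd : FiniteDimensional ℂ (M ⧸ S) := Module.Finite.equiv e₂
  have hMfd : FiniteDimensional ℂ M := fd_of_submodule_quotient S hSfd hMSfd
  -- dimension count
  have h1 : finrank ℂ (M ⧸ S) + finrank ℂ S = finrank ℂ M :=
    Submodule.finrank_quotient_add_finrank S
  have h2 : finrank ℂ (↥Y₂ ⧸ Y.comap Y₂.subtype) + finrank ℂ (Y.comap Y₂.subtype)
      = finrank ℂ Y₂ := Submodule.finrank_quotient_add_finrank _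
  have h3 : finrank ℂ (Y.comap Y₂.subtype) = finrank ℂ Y :=
    LinearEquiv.finrank_eq (Submodule.comapSubtypeEquivOfLe hYY)
  have h4 : finrank ℂ (↥Y₂ ⧸ Y.comap Y₂.subtype) = finrank ℂ (M ⧸ S) :=
    LinearEquiv.finrank_eq e₂
  have h5 : finrank ℂ (↥A ⧸ X₂.comap A.subtype) = finrank ℂ S := LinearEquiv.finrank_eq e₁
  show (finrank ℂ (↥A ⧸ X₂.comap A.subtype) : ℤ) - (finrank ℂ Y : ℤ)
      = (finrank ℂ M : ℤ) - (finrank ℂ Y₂ : ℤ)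
  omega

/-- If closed subspaces `X₁, X₂` of a Hilbert space are finite rank perturbations of each
other, then the relative index `[X₁, X₂] = dim((X₁ ⊕ Y)/X₂) − dim Y` does not depend on
the choice of the finite-dimensional subspace `Y` with `X₂ ⊆ X₁ ⊕ Y` (direct sum) and
`dim((X₁ ⊕ Y)/X₂) < ∞`. -/
theorem relIdx_well_defined {H : Type*} [NormedAddCommGroup H]
    [InnerProductSpace ℂ H] [CompleteSpace H]
    (X₁ X₂ : Submodule ℂ H) (hX₁ : IsClosed (X₁ : Set H)) (hX₂ : IsClosed (X₂ : Set H))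
    (Y Y' : Submodule ℂ H)
    (hY : FiniteDimensional ℂ Y) (hY' : FiniteDimensional ℂ Y')
    (hdY : Disjoint X₁ Y) (hdY' : Disjoint X₁ Y')
    (hle : X₂ ≤ X₁ ⊔ Y) (hle' : X₂ ≤ X₁ ⊔ Y')
    (hq : FiniteDimensional ℂ (↥(X₁ ⊔ Y) ⧸ X₂.comap (X₁ ⊔ Y).subtype))
    (hq' : FiniteDimensional ℂ (↥(X₁ ⊔ Y') ⧸ X₂.comap (X₁ ⊔ Y').subtype)) :
    relIdxWith X₁ X₂ Y = relIdxWith X₁ X₂ Y' := by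
  set W := Y ⊔ Y' with hW
  have hWfd : FiniteDimensional ℂ W := Submodule.finiteDimensional_sup Y Y'
  obtain ⟨Y₂, hY2le, hY2W, hd2, hsup2⟩ := exists_extend X₁ W Y le_sup_left hdY
  obtain ⟨Y₂', hY2'le, hY2'W, hd2', hsup2'⟩ := exists_extend X₁ W Y' le_sup_right hdY'
  have hY2fd : FiniteDimensional ℂ Y₂ := Submodule.finiteDimensional_of_le hY2W
  have hY2'fd : FiniteDimensional ℂ Y₂' := Submodule.finiteDimensional_of_le hY2'W
  have e1 : relIdxWith X₁ X₂ Y = relIdxWith X₁ X₂ Y₂ :=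
    relIdxWith_sup X₁ X₂ Y Y₂ hY2le hd2 hle
  have e2 : relIdxWith X₁ X₂ Y' = relIdxWith X₁ X₂ Y₂' :=
    relIdxWith_sup X₁ X₂ Y' Y₂' hY2'le hd2' hle'
  have hZ : X₁ ⊔ Y₂ = X₁ ⊔ Y₂' := by rw [hsup2, hsup2']
  have hfr : finrank ℂ Y₂ = finrank ℂ Y₂' := finrank_eq_of_sup_eq X₁ Y₂ Y₂' hd2 hd2' hZ
  rw [e1, e2]
  unfold relIdxWith
  rw [hfr]
  congr 1
  exact_mod_cast congrArg
    (fun Z : Submodule ℂ H => finrank ℂ (↥Z ⧸ X₂.comap Z.subtype)) hZ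
end

section
/- For closed subspaces X₁, X₂ of a Hilbert space that are finite rank perturbations of each other, the relative index is antisymmetric: [X₂, X₁] = −[X₁, X₂], and it equals the relative index of the orthogonal complements: [X₁^⊥, X₂^⊥] = −[X₁, X₂]. -/
/-- `Y` is an admissible witness for the relative index `[X₁, X₂]`. -/
def relIdxWitness {H : Type*} [NormedAddCommGroup H] [InnerProductSpace ℂ H]
    (X₁ X₂ Y : Submodule ℂ H) : Prop :=
  FiniteDimensional ℂ Y ∧ Disjoint X₁ Y ∧ X₂ ≤ X₁ ⊔ Y ∧
    FiniteDimensional ℂ (↥(X₁ ⊔ Y) ⧸ X₂.comap (X₁ ⊔ Y).subtype)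

/-!
Relative to an admissible witness `Y`, put `Z = A ⊕ Y`. Computing the codimension of `A ⊓ B` in
`Z` through `A` and through `B` gives `[A, B] = dim A/(A ⊓ B) − dim B/(A ⊓ B)`, which is visibly
antisymmetric. For closed `X ≤ V` in a Hilbert space, `Xᗮ ⊓ V` is a complement both of `Vᗮ` in
`Xᗮ` and of `X` in `V`, so `dim Xᗮ/Vᗮ = dim V/X`. Applied to `V = X₁ ⊔ X₂` (closed, being `X₁`
plus a finite-dimensional space) together with `X₁ᗮ ⊓ X₂ᗮ = (X₁ ⊔ X₂)ᗮ`, this exchanges the two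
codimensions in the formula for `[X₁ᗮ, X₂ᗮ]`.
-/

open Module

namespace Submodule

section Algebra

variable {K M : Type*} [DivisionRing K] [AddCommGroup M] [Module K M]

noncomputable def relCodim (p q : Submodule K M) : ℕ :=
  finrank K (q ⧸ p.comap q.subtype)

theorem comap_subtype_inf_left (p q : Submodule K M) :
    (q ⊓ p).comap q.subtype = p.comap q.subtype := by
  rw [comap_inf, comap_subtype_self, top_inf_eq]

theorem relCodim_inf_left (p q : Submodule K M) : (q ⊓ p).relCodim q = p.relCodim q := by
  rw [relCodim, comap_subtype_inf_left, relCodim]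

theorem relCodim_inf_right (p q : Submodule K M) : (p ⊓ q).relCodim q = p.relCodim q := by
  rw [inf_comm, relCodim_inf_left]

theorem relCodim_sup_left (p q : Submodule K M) : p.relCodim (p ⊔ q) = p.relCodim q := by
  have e := LinearMap.quotientInfEquivSupQuotient q p
  rw [comap_subtype_self, top_inf_eq, sup_comm] at e
  exact e.finrank_eq.symm

noncomputable def quotientComapInclusion (C : Submodule K M) {P Q : Submodule K M}
    (hPQ : P ≤ Q) : (P ⧸ C.comap P.subtype) →ₗ[K] Q ⧸ C.comap Q.subtype :=
  mapQ _ _ (inclusion hPQ) (by rw [← comap_comp, subtype_comp_inclusion])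

theorem quotientComapInclusion_injective (C : Submodule K M) {P Q : Submodule K M}
    (hPQ : P ≤ Q) : Function.Injective (C.quotientComapInclusion hPQ) := by
  rw [← LinearMap.ker_eq_bot, quotientComapInclusion, ker_mapQ, ← comap_comp,
    subtype_comp_inclusion, mkQ_map_self]

theorem range_quotientComapInclusion (C : Submodule K M) {P Q : Submodule K M}
    (hPQ : P ≤ Q) : LinearMap.range (C.quotientComapInclusion hPQ) =
      (P.comap Q.subtype).map (C.comap Q.subtype).mkQ := by
  rw [quotientComapInclusion, range_mapQ, range_inclusion]

theorem finiteDimensional_quotient_comap_of_le (C : Submodule K M) {P Q : Submodule K M}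
    (hPQ : P ≤ Q) [FiniteDimensional K (Q ⧸ C.comap Q.subtype)] :
    FiniteDimensional K (P ⧸ C.comap P.subtype) :=
  .of_injective _ (C.quotientComapInclusion_injective hPQ)

theorem rank_quotient_comap_add_rank_quotient_comap {C P Q : Submodule K M} (hCP : C ≤ P)
    (hPQ : P ≤ Q) :
    Module.rank K (P ⧸ C.comap P.subtype) + Module.rank K (Q ⧸ P.comap Q.subtype) =
      Module.rank K (Q ⧸ C.comap Q.subtype) := by
  rw [← rank_quotient_add_rank (LinearMap.range (C.quotientComapInclusion hPQ)),
    rank_range_of_injective _ (C.quotientComapInclusion_injective hPQ),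
    range_quotientComapInclusion, (quotientQuotientEquivQuotient _ _ (comap_mono hCP)).rank_eq,
    add_comm]

theorem relCodim_add_relCodim {C P Q : Submodule K M} (hCP : C ≤ P) (hPQ : P ≤ Q)
    [FiniteDimensional K (P ⧸ C.comap P.subtype)] [FiniteDimensional K (Q ⧸ P.comap Q.subtype)] :
    C.relCodim P + P.relCodim Q = C.relCodim Q := by
  rw [relCodim, relCodim, relCodim, finrank, finrank, finrank,
    ← rank_quotient_comap_add_rank_quotient_comap hCP hPQ,
    Cardinal.toNat_add (rank_lt_aleph0 _ _) (rank_lt_aleph0 _ _)]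

noncomputable def quotientComapEquivOfDisjoint {A B C : Submodule K M} (hCB : C ≤ B)
    (hAC : Disjoint A C) (hB : B ≤ A ⊔ C) : C ≃ₗ[K] B ⧸ A.comap B.subtype :=
  .ofBijective ((A.comap B.subtype).mkQ ∘ₗ inclusion hCB) <| by
    refine ⟨?_, fun z ↦ ?_⟩
    · rw [← LinearMap.ker_eq_bot, LinearMap.ker_comp, ker_mkQ, ← comap_comp,
        subtype_comp_inclusion, ← disjoint_iff_comap_eq_bot]
      exact hAC.symm
    · obtain ⟨⟨b, hb⟩, rfl⟩ := Quotient.mk_surjective _ z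
      obtain ⟨a, ha, c, hc, rfl⟩ := mem_sup.1 (hB hb)
      refine ⟨⟨c, hc⟩, (Quotient.eq _).2 ?_⟩
      simpa using ha

/-- Both quotients are isomorphic to `X' ⊓ V`. -/
theorem relCodim_eq_of_isCompl {X V X' V' : Submodule K M} (hXV : X ≤ V) (hVX' : V' ≤ X')
    (hX : IsCompl X X') (hV : IsCompl V V') : V'.relCodim X' = X.relCodim V := by
  have e₁ := quotientComapEquivOfDisjoint (A := V') (C := X' ⊓ V) inf_le_left
    (hV.disjoint.symm.mono_right inf_le_right)
    (by rw [inf_comm, ← sup_inf_assoc_of_le _ hVX', sup_comm, hV.sup_eq_top, top_inf_eq])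
  have e₂ := quotientComapEquivOfDisjoint (A := X) (C := X' ⊓ V) inf_le_right
    (hX.disjoint.mono_right inf_le_left)
    (by rw [← sup_inf_assoc_of_le _ hXV, hX.sup_eq_top, top_inf_eq])
  exact e₁.finrank_eq.symm.trans e₂.finrank_eq

end Algebra

theorem isClosed_sup_of_le_sup_finiteDimensional {𝕜 E : Type*} [NontriviallyNormedField 𝕜]
    [CompleteSpace 𝕜] [AddCommGroup E] [TopologicalSpace E] [IsTopologicalAddGroup E]
    [Module 𝕜 E] [ContinuousSMul 𝕜 E] {A B Y : Submodule 𝕜 E} (hA : IsClosed (A : Set E))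
    [FiniteDimensional 𝕜 Y] (hB : B ≤ A ⊔ Y) : IsClosed ((A ⊔ B : Submodule 𝕜 E) : Set E) := by
  rw [← inf_eq_right.2 (sup_le le_sup_left hB), sup_inf_assoc_of_le _ le_sup_left]
  exact A.isClosed_sup_finiteDimensional _ hA

theorem relCodim_orthogonal {𝕜 E : Type*} [RCLike 𝕜] [NormedAddCommGroup E]
    [InnerProductSpace 𝕜 E] {A B : Submodule 𝕜 E} [A.HasOrthogonalProjection]
    [(A ⊔ B).HasOrthogonalProjection] : Bᗮ.relCodim Aᗮ = A.relCodim B := by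
  rw [← relCodim_inf_left, inf_orthogonal, relCodim_eq_of_isCompl le_sup_left
    (orthogonal_le le_sup_left) A.isCompl_orthogonal (A ⊔ B).isCompl_orthogonal,
    relCodim_sup_left]

end Submodule

open Submodule

theorem relIdxWith_eq_relCodim_sub_relCodim {H : Type*} [NormedAddCommGroup H]
    [InnerProductSpace ℂ H] {A B Y : Submodule ℂ H} (h : relIdxWitness A B Y) :
    relIdxWith A B Y = B.relCodim A - A.relCodim B := by
  obtain ⟨hY, hAY, hBZ, hZB⟩ := h
  set Z := A ⊔ Y
  have eY : Y ≃ₗ[ℂ] Z ⧸ A.comap Z.subtype := quotientComapEquivOfDisjoint le_sup_right hAY le_rfl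
  have : FiniteDimensional ℂ (Z ⧸ A.comap Z.subtype) := .equiv eY
  have : FiniteDimensional ℂ (A ⧸ (A ⊓ B).comap A.subtype) := by
    rw [comap_subtype_inf_left]
    exact B.finiteDimensional_quotient_comap_of_le (Q := Z) le_sup_left
  have : FiniteDimensional ℂ (B ⧸ (A ⊓ B).comap B.subtype) := by
    rw [inf_comm, comap_subtype_inf_left]
    exact A.finiteDimensional_quotient_comap_of_le hBZ
  have hA := relCodim_add_relCodim (inf_le_left : A ⊓ B ≤ A) (show A ≤ Z from le_sup_left)
  have hB := relCodim_add_relCodim (inf_le_right : A ⊓ B ≤ B) hBZ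
  rw [relCodim_inf_left] at hA
  rw [relCodim_inf_right] at hB
  have hZA : A.relCodim Z = finrank ℂ Y := eY.finrank_eq.symm
  change (B.relCodim Z : ℤ) - finrank ℂ Y = _
  omega

/-- For closed subspaces `X₁, X₂` of a Hilbert space that are finite rank perturbations of
each other, the relative index is antisymmetric, `[X₂, X₁] = −[X₁, X₂]`, and the relative
index of the orthogonal complements satisfies `[X₁^⊥, X₂^⊥] = −[X₁, X₂]`. -/
theorem relIdx_antisymm_and_orthogonal {H : Type*} [NormedAddCommGroup H]
    [InnerProductSpace ℂ H] [CompleteSpace H]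
    (X₁ X₂ : Submodule ℂ H) (hX₁ : IsClosed (X₁ : Set H)) (hX₂ : IsClosed (X₂ : Set H))
    (Y Y' Y'' : Submodule ℂ H)
    (hY : relIdxWitness X₁ X₂ Y)
    (hY' : relIdxWitness X₂ X₁ Y')
    (hY'' : relIdxWitness X₁ᗮ X₂ᗮ Y'') :
    relIdxWith X₂ X₁ Y' = -relIdxWith X₁ X₂ Y ∧
    relIdxWith X₁ᗮ X₂ᗮ Y'' = -relIdxWith X₁ X₂ Y := by
  have := hY.1
  have hX₁₂ : IsClosed ((X₁ ⊔ X₂ : Submodule ℂ H) : Set H) :=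
    isClosed_sup_of_le_sup_finiteDimensional hX₁ hY.2.2.1
  have : CompleteSpace X₁ := hX₁.completeSpace_coe
  have : CompleteSpace X₂ := hX₂.completeSpace_coe
  have : CompleteSpace ↥(X₁ ⊔ X₂) := hX₁₂.completeSpace_coe
  have : CompleteSpace ↥(X₂ ⊔ X₁) := sup_comm X₁ X₂ ▸ hX₁₂.completeSpace_coe
  rw [relIdxWith_eq_relCodim_sub_relCodim hY, relIdxWith_eq_relCodim_sub_relCodim hY',
    relIdxWith_eq_relCodim_sub_relCodim hY'', relCodim_orthogonal, relCodim_orthogonal]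
  constructor <;> ring
end
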